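/- Let G be a directed graph satisfying: for every node i, every in-neighbor j of i, and every in-neighbor h of j with h ≠ i, either h is an in-neighbor of i, or there are at least 2f+1 directed two-hop paths from h to i. If A is an f-local set of malicious nodes and i ∉ A, then for every two-hop neighbor h of i (with h not an in-neighbor of i), the number of intermediate nodes on two-hop paths from h to i that are not in A exceeds the number that are in A. -/
import Mathlib


open Finset

/-- Sufficiency argument of Theorem 2(a): suppose the digraph satisfies the
condition for Algorithm 2 with parameter `f` (for every node `i`, in-neighbor
`j` of `i`, and in-neighbor `h ≠ i` of `j`, either `h` is an in-neighbor of
`i` or there are at least `2f+1` directed two-hop paths from `h` to `i`), and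
`A` is `f`-local with `i ∉ A`.  Then for every two-hop neighbor `h` of `i`
that is not an in-neighbor of `i`, the intermediate nodes not in `A` strictly
outnumber those in `A`. -/
theorem normal_intermediaries_majority {V : Type*} [Fintype V] [DecidableEq V]
    (E : V → V → Prop) [DecidableRel E] (f : ℕ)
    (hcond : ∀ i j h : V, E j i → E h j → h ≠ i →
      (E h i ∨ 2 * f + 1 ≤ (univ.filter (fun m => E h m ∧ E m i)).card))
    (A : Finset V)
    (hlocal : ∀ i : V, i ∉ A →
      (univ.filter (fun j => E j i ∧ j ∈ A)).card ≤ f)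
    (i : V) (hi : i ∉ A) (h : V) (hhi : h ≠ i) (hnotnb : ¬ E h i)
    (htwohop : ∃ j : V, E h j ∧ E j i) :
    ((univ.filter (fun m => E h m ∧ E m i)).filter (fun m => m ∈ A)).card <
      ((univ.filter (fun m => E h m ∧ E m i)).filter (fun m => m ∉ A)).card := by
  obtain ⟨j, hhj, hji⟩ := htwohop
  set S := univ.filter (fun m => E h m ∧ E m i) with hS
  have hbig : 2 * f + 1 ≤ S.card := by
    rcases hcond i j h hji hhj hhi with h1 | h1
    · exact absurd h1 hnotnb
    · exact h1
  have hsub : S.filter (fun m => m ∈ A) ⊆ univ.filter (fun j => E j i ∧ j ∈ A) := by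
    intro m hm
    simp only [hS, mem_filter, mem_univ, true_and] at hm ⊢
    exact ⟨hm.1.2, hm.2⟩
  have hA : (S.filter (fun m => m ∈ A)).card ≤ f :=
    le_trans (card_le_card hsub) (hlocal i hi)
  have hsplit : (S.filter (fun m => m ∈ A)).card + (S.filter (fun m => m ∉ A)).card = S.card :=
    card_filter_add_card_filter_not (fun m => m ∈ A)
  omega
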